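/- arXiv:1310.1606 — 4 statements merged into one kernel-verified Lean document; each statement's English description precedes it below -/
import Mathlib

section
/- Let r ≥ 0 and let A be the n×n real matrix whose every entry in the first column equals r and all of whose other entries are zero. Then A and the matrix r·J_n have the same characteristic polynomial, namely t^{n−1}(t − r); in particular, A (which has all row sums equal to r) is cospectral to the nonnegative r-generalized doubly stochastic matrix r·J_n, showing that the bound k_A = −r in the preceding realization theorem can be attained. -/
/-! Both matrices have rank one, `A = r·𝟙 e₀ᵀ` and `r·J_n = (r/n)·𝟙 𝟙ᵀ`, and a rank-one matrix
`u vᵀ` has characteristic polynomial `t^(n-1) (t - u ⬝ v)`. Here both traces `u ⬝ v` equal `r`. -/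

open Polynomial

noncomputable def Jmat (n : ℕ) : Matrix (Fin n) (Fin n) ℝ :=
  Matrix.of fun _ _ => (1 : ℝ) / n

namespace Matrix

theorem charpoly_vecMulVec_eq_X_pow_mul {ι R : Type*} [Fintype ι] [DecidableEq ι] [Nonempty ι]
    [CommRing R] (u v : ι → R) :
    (vecMulVec u v).charpoly = X ^ (Fintype.card ι - 1) * (X - C (u ⬝ᵥ v)) := by
  rw [charpoly_vecMulVec, mul_sub, ← pow_succ, Nat.sub_add_cancel Fintype.card_pos,
    smul_eq_C_mul, mul_comm (C _)]

end Matrix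

open Matrix

theorem smul_Jmat_eq_vecMulVec (n : ℕ) (r : ℝ) :
    r • Jmat n = vecMulVec (fun _ => r / n) (fun _ => 1) := by
  ext i j
  simp [Jmat, vecMulVec_apply, div_eq_mul_inv]

theorem Fin.sum_const_div_self {K : Type*} [Field K] [CharZero K] {n : ℕ} (hn : n ≠ 0) (r : K) :
    ∑ _ : Fin n, r / n = r := by
  have : (n : K) ≠ 0 := Nat.cast_ne_zero.2 hn
  simp [mul_div_cancel₀ r this]

/-- Let `r ≥ 0` and let `A` be the `n × n` matrix (`n ≥ 1`) whose every entry in the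
first column equals `r` and all of whose other entries are zero.  Then `A` has all row
sums equal to `r`, the matrix `r·J_n` is entrywise nonnegative with all row and column
sums equal to `r`, and `A` and `r·J_n` share the characteristic polynomial
`t^(n-1)·(t - r)`. -/
theorem stmt8 (n : ℕ) (hn : 0 < n) (r : ℝ) (hr : 0 ≤ r)
    (A : Matrix (Fin n) (Fin n) ℝ) (hA : ∀ i j, A i j = if j = ⟨0, hn⟩ then r else 0) :
    (∀ i, ∑ j, A i j = r) ∧
    (∀ i j, 0 ≤ (r • Jmat n) i j) ∧
    (∀ i, ∑ j, (r • Jmat n) i j = r) ∧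
    (∀ j, ∑ i, (r • Jmat n) i j = r) ∧
    A.charpoly = (r • Jmat n).charpoly ∧
    A.charpoly = X ^ (n - 1) * (X - C r) := by
  have : Nonempty (Fin n) := ⟨⟨0, hn⟩⟩
  have hA_eq : A = vecMulVec (fun _ => r) (Pi.single ⟨0, hn⟩ 1) := by
    ext i j
    simp [hA, vecMulVec_apply, Pi.single_apply]
  have hJ (i j : Fin n) : (r • Jmat n) i j = r / n := by
    rw [smul_Jmat_eq_vecMulVec, vecMulVec_apply, mul_one]
  have hcharpoly : A.charpoly = X ^ (n - 1) * (X - C r) := by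
    rw [hA_eq, charpoly_vecMulVec_eq_X_pow_mul]
    simp
  refine ⟨fun i => by simp [hA], fun i j => by rw [hJ]; positivity,
    fun i => by simpa only [hJ] using Fin.sum_const_div_self hn.ne' r,
    fun j => by simpa only [hJ] using Fin.sum_const_div_self hn.ne' r, ?_, hcharpoly⟩
  rw [hcharpoly, smul_Jmat_eq_vecMulVec, charpoly_vecMulVec_eq_X_pow_mul, Fintype.card_fin]
  simp only [dotProduct, mul_one, Fin.sum_const_div_self hn.ne']
end

section
/- Let A = (a_{ij}) be an n×n stochastic matrix (entrywise nonnegative with every row sum equal to 1) such that for each column j, the column sum x_j and the smallest column entry a_j satisfy x_j ≤ 1 + n·a_j. Then B = A − J_n·A + J_n is the unique closest doubly stochastic matrix to A with respect to the Frobenius norm: B is doubly stochastic, and for every doubly stochastic n×n matrix C, ‖A − B‖_F ≤ ‖A − C‖_F with equality only if C = B. -/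
/-- The Frobenius norm `‖M‖_F = sqrt (Σ_{i,j} m_{ij}²)`. -/
noncomputable def frobNorm {n : ℕ} (M : Matrix (Fin n) (Fin n) ℝ) : ℝ :=
  Real.sqrt (∑ i, ∑ j, (M i j) ^ 2)

/-!
`A - J_n A + J_n` is obtained from `A` by adding `(1 - x_j)/n` to every entry of column `j`,
so it has unit column sums, keeps the unit row sums of `A` (since `Σ_j x_j = n`), and is
nonnegative exactly when `x_j ≤ 1 + n·a_j`. The correction `B - A` is constant along each column,
hence Frobenius-orthogonal to `B - C` for any `C` with the same column sums as `B`; Pythagoras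
then gives `‖A - C‖_F² = ‖A - B‖_F² + ‖B - C‖_F²`.
-/

section SumSq

variable {m k : Type*} [Fintype m] [Fintype k]

theorem Matrix.sum_sum_sq_eq_zero_iff (M : Matrix m k ℝ) :
    ∑ i, ∑ j, M i j ^ 2 = 0 ↔ M = 0 := by
  refine ⟨fun h => ?_, fun h => by simp [h]⟩
  ext i j
  have hrow := (Fintype.sum_eq_zero_iff_of_nonneg
    (fun i => Fintype.sum_nonneg fun j => sq_nonneg (M i j))).1 h
  have hij := (Fintype.sum_eq_zero_iff_of_nonneg (fun j => sq_nonneg (M i j))).1 (congrFun hrow i)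
  exact pow_eq_zero_iff two_ne_zero |>.1 (congrFun hij j)

theorem Matrix.sum_sum_sq_add_of_col_const_of_col_sum_zero (D E : Matrix m k ℝ) (c : k → ℝ)
    (hD : ∀ i j, D i j = c j) (hE : ∀ j, ∑ i, E i j = 0) :
    ∑ i, ∑ j, (D + E) i j ^ 2 = ∑ i, ∑ j, D i j ^ 2 + ∑ i, ∑ j, E i j ^ 2 := by
  have cross : ∑ i, ∑ j, D i j * E i j = 0 := by
    rw [Finset.sum_comm]
    simp [hD, ← Finset.mul_sum, hE]
  calc ∑ i, ∑ j, (D + E) i j ^ 2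
      = ∑ i, ∑ j, (D i j ^ 2 + 2 * (D i j * E i j) + E i j ^ 2) := by
        simp only [Matrix.add_apply, add_sq, mul_assoc]
    _ = _ := by
        simp only [Finset.sum_add_distrib, ← Finset.mul_sum, cross]
        ring

end SumSq

section FrobNorm

variable {n : ℕ}

theorem frobNorm_nonneg (M : Matrix (Fin n) (Fin n) ℝ) : 0 ≤ frobNorm M :=
  Real.sqrt_nonneg _

theorem frobNorm_sq (M : Matrix (Fin n) (Fin n) ℝ) : frobNorm M ^ 2 = ∑ i, ∑ j, M i j ^ 2 :=
  Real.sq_sqrt (Fintype.sum_nonneg fun _ => Fintype.sum_nonneg fun _ => sq_nonneg _)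

theorem frobNorm_eq_zero_iff (M : Matrix (Fin n) (Fin n) ℝ) : frobNorm M = 0 ↔ M = 0 := by
  rw [← Matrix.sum_sum_sq_eq_zero_iff, ← frobNorm_sq, pow_eq_zero_iff two_ne_zero]

end FrobNorm

section Projection

variable {n : ℕ}

theorem Jmat_mul_apply (A : Matrix (Fin n) (Fin n) ℝ) (i j : Fin n) :
    (Jmat n * A) i j = (∑ k, A k j) / n := by
  simp [Jmat, Matrix.mul_apply, Finset.mul_sum, div_eq_inv_mul]

theorem sub_Jmat_mul_add_Jmat_apply (A : Matrix (Fin n) (Fin n) ℝ) (i j : Fin n) :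
    (A - Jmat n * A + Jmat n) i j = A i j + (1 - ∑ k, A k j) / n := by
  rw [Matrix.add_apply, Matrix.sub_apply, Jmat_mul_apply, Jmat, Matrix.of_apply]
  ring

theorem sum_sub_Jmat_mul_add_Jmat_col (A : Matrix (Fin n) (Fin n) ℝ) (j : Fin n) :
    ∑ i, (A - Jmat n * A + Jmat n) i j = 1 := by
  have hn : (n : ℝ) ≠ 0 := Nat.cast_ne_zero.mpr j.pos.ne'
  simp only [sub_Jmat_mul_add_Jmat_apply, Finset.sum_add_distrib, Finset.sum_const,
    Finset.card_univ, Fintype.card_fin, nsmul_eq_mul]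
  field_simp
  ring

theorem sum_sub_Jmat_mul_add_Jmat_row (A : Matrix (Fin n) (Fin n) ℝ)
    (hrow : ∀ i, ∑ j, A i j = 1) (i : Fin n) :
    ∑ j, (A - Jmat n * A + Jmat n) i j = 1 := by
  have hn : (n : ℝ) ≠ 0 := Nat.cast_ne_zero.mpr i.pos.ne'
  have htotal : ∑ j, ∑ k, A k j = n := by
    rw [Finset.sum_comm]
    simp [hrow]
  simp only [sub_Jmat_mul_add_Jmat_apply, Finset.sum_add_distrib, ← Finset.sum_div,
    Finset.sum_sub_distrib, hrow, htotal, Finset.sum_const, Finset.card_univ, Fintype.card_fin,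
    nsmul_eq_mul, mul_one, sub_self, zero_div, add_zero]

theorem sub_Jmat_mul_add_Jmat_nonneg (A : Matrix (Fin n) (Fin n) ℝ)
    (hcond : ∀ j, ∑ i, A i j ≤ 1 + n * ⨅ i, A i j) (i j : Fin n) :
    0 ≤ (A - Jmat n * A + Jmat n) i j := by
  have hn : (0 : ℝ) < n := Nat.cast_pos.mpr i.pos
  have hmin : ⨅ k, A k j ≤ A i j := ciInf_le (Finite.bddBelow_range _) i
  have hcorr : -A i j ≤ (1 - ∑ k, A k j) / n := by
    rw [le_div_iff₀ hn]
    nlinarith [hcond j]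
  rw [sub_Jmat_mul_add_Jmat_apply]
  linarith

theorem frobNorm_sub_sq_eq_add (A C : Matrix (Fin n) (Fin n) ℝ) (hCcol : ∀ j, ∑ i, C i j = 1) :
    frobNorm (A - C) ^ 2 = frobNorm (A - (A - Jmat n * A + Jmat n)) ^ 2
      + frobNorm (A - Jmat n * A + Jmat n - C) ^ 2 := by
  rw [frobNorm_sq, frobNorm_sq, frobNorm_sq, ← sub_add_sub_cancel A (A - Jmat n * A + Jmat n) C]
  refine Matrix.sum_sum_sq_add_of_col_const_of_col_sum_zero _ _
    (fun j => -((1 - ∑ k, A k j) / n)) (fun i j => ?_) (fun j => ?_)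
  · rw [Matrix.sub_apply, sub_Jmat_mul_add_Jmat_apply]
    ring
  · simp only [Matrix.sub_apply, Finset.sum_sub_distrib, sum_sub_Jmat_mul_add_Jmat_col, hCcol,
      sub_self]

end Projection

theorem stmt10_general (n : ℕ) (A : Matrix (Fin n) (Fin n) ℝ)
    (hrow : ∀ i, ∑ j, A i j = 1)
    (hcond : ∀ j, ∑ i, A i j ≤ 1 + n * ⨅ i, A i j)
    (B : Matrix (Fin n) (Fin n) ℝ) (hB : B = A - Jmat n * A + Jmat n) :
    (∀ i j, 0 ≤ B i j) ∧
    (∀ i, ∑ j, B i j = 1) ∧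
    (∀ j, ∑ i, B i j = 1) ∧
    (∀ C : Matrix (Fin n) (Fin n) ℝ,
      (∀ i j, 0 ≤ C i j) → (∀ i, ∑ j, C i j = 1) → (∀ j, ∑ i, C i j = 1) →
      frobNorm (A - B) ≤ frobNorm (A - C) ∧
      (frobNorm (A - B) = frobNorm (A - C) → C = B)) := by
  subst hB
  refine ⟨sub_Jmat_mul_add_Jmat_nonneg A hcond, sum_sub_Jmat_mul_add_Jmat_row A hrow,
    sum_sub_Jmat_mul_add_Jmat_col A, fun C _ _ hCcol => ?_⟩
  have hpyth := frobNorm_sub_sq_eq_add A C hCcol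
  refine ⟨(sq_le_sq₀ (frobNorm_nonneg _) (frobNorm_nonneg _)).1
    (by linarith [sq_nonneg (frobNorm (A - Jmat n * A + Jmat n - C))]), fun heq => ?_⟩
  rw [heq, left_eq_add, pow_eq_zero_iff two_ne_zero, frobNorm_eq_zero_iff, sub_eq_zero] at hpyth
  exact hpyth.symm

/-- Let `A` be an `n × n` stochastic matrix such that each column sum `x_j` and smallest
column entry `a_j = ⨅ i, a_{ij}` satisfy `x_j ≤ 1 + n·a_j`.  Then
`B = A - J_n·A + J_n` is doubly stochastic and is the unique closest doubly stochastic
matrix to `A` with respect to the Frobenius norm. -/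
theorem stmt10 (n : ℕ) (A : Matrix (Fin n) (Fin n) ℝ)
    (hA : ∀ i j, 0 ≤ A i j) (hrow : ∀ i, ∑ j, A i j = 1)
    (hcond : ∀ j, ∑ i, A i j ≤ 1 + n * ⨅ i, A i j)
    (B : Matrix (Fin n) (Fin n) ℝ) (hB : B = A - Jmat n * A + Jmat n) :
    (∀ i j, 0 ≤ B i j) ∧
    (∀ i, ∑ j, B i j = 1) ∧
    (∀ j, ∑ i, B i j = 1) ∧
    (∀ C : Matrix (Fin n) (Fin n) ℝ,
      (∀ i j, 0 ≤ C i j) → (∀ i, ∑ j, C i j = 1) → (∀ j, ∑ i, C i j = 1) →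
      frobNorm (A - B) ≤ frobNorm (A - C) ∧
      (frobNorm (A - B) = frobNorm (A - C) → C = B)) :=
  stmt10_general n A hrow hcond B hB
end

section
/- Let A be a real n×n matrix having 1 as an eigenvalue, i.e., (t − 1) divides the characteristic polynomial of A over ℝ. Then there exists a real number k ≥ 0 and an entrywise nonnegative real n×n matrix B with every row sum and every column sum equal to 1 + k such that charpoly(B)·(t − 1) = charpoly(A)·(t − (1 + k)); that is, the eigenvalue multiset of B is obtained from that of A by replacing one occurrence of the eigenvalue 1 by 1 + k. -/
/-!
Write `charpoly A = (X - 1) * p` and realise the monic `p` as the characteristic polynomial of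
some `M` (multiplication by the root in `ℝ[X]/(p)`). Put `D s = diag(M, s)`, whose last basis
vector `v` is a left and right eigenvector for `s`. A Householder reflection `H` sends `v` to the
constant vector `r • 1` with `r = 1/√N`; then `B = H (D s) H` has the characteristic polynomial
of `D s`, and all its row and column sums equal `s`. Moreover `B = H (D 0) H + s r² J` with `J`
the all-ones matrix, so `B` is entrywise nonnegative once `s` is large; take `k = s - 1`.
-/

open Polynomial Matrix Filter

theorem Polynomial.Monic.exists_matrix_charpoly_eq {K : Type*} [Field K] {p : K[X]}
    (hp : p.Monic) : ∃ M : Matrix (Fin p.natDegree) (Fin p.natDegree) K, M.charpoly = p := by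
  refine ⟨_, (charpoly_leftMulMatrix (AdjoinRoot.powerBasis' hp)).trans ?_⟩
  rw [AdjoinRoot.powerBasis'_gen, AdjoinRoot.minpoly_root hp.ne_zero, hp.leadingCoeff, inv_one,
    C_1, mul_one]

namespace Matrix

section

variable {κ : Type*} [Fintype κ]

theorem exists_mul_self_eq_one_transpose_eq_mulVec_eq [DecidableEq κ] {K : Type*} [Field K]
    [LinearOrder K] [IsStrictOrderedRing K] {x y : κ → K} (h : x ⬝ᵥ x = y ⬝ᵥ y) :
    ∃ H : Matrix κ κ K, H * H = 1 ∧ Hᵀ = H ∧ H *ᵥ x = y := by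
  -- The Householder reflection along `w = x - y`; for `x = y` the junk value `2 / 0 = 0`
  -- makes it the identity.
  set w := x - y
  set c : K := 2 / (w ⬝ᵥ w)
  have hww : w ⬝ᵥ w = 2 * (w ⬝ᵥ x) := by
    simp only [w, sub_dotProduct, dotProduct_sub, dotProduct_comm y x, h]
    ring
  refine ⟨1 - c • vecMulVec w w, ?_, by simp, ?_⟩
  · have hc : c * (c * (w ⬝ᵥ w) - 2) = 0 := by
      rcases eq_or_ne (w ⬝ᵥ w) 0 with hw | hw <;> simp [c, hw]
    have hsq : vecMulVec w w * vecMulVec w w = (w ⬝ᵥ w) • vecMulVec w w := by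
      rw [vecMulVec_mul_vecMulVec]
      ext
      simp [vecMulVec_apply]
      ring
    calc (1 - c • vecMulVec w w) * (1 - c • vecMulVec w w)
        = 1 + (c * (c * (w ⬝ᵥ w) - 2)) • vecMulVec w w := by
          simp only [sub_mul, mul_sub, one_mul, mul_one, smul_mul_smul_comm, hsq, smul_smul]
          module
      _ = 1 := by rw [hc, zero_smul, add_zero]
  · have hcw : (c * (w ⬝ᵥ x)) • w = w := by
      rcases eq_or_ne (w ⬝ᵥ w) 0 with hw | hw
      · simp [dotProduct_self_eq_zero.1 hw]
      · rw [hww] at hw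
        have hwx : w ⬝ᵥ x ≠ 0 := right_ne_zero_of_mul hw
        rw [show c * (w ⬝ᵥ x) = 1 by simp only [c, hww]; field_simp, one_smul]
    rw [sub_mulVec, one_mulVec, smul_mulVec, vecMulVec_mulVec, op_smul_eq_smul, smul_smul, hcw,
      sub_sub_cancel]

def IsGenDoublyStochastic {R : Type*} [AddCommMonoid R] (s : R) (B : Matrix κ κ R) : Prop :=
  (∀ i, ∑ j, B i j = s) ∧ ∀ j, ∑ i, B i j = s

theorem IsGenDoublyStochastic.reindex {R κ' : Type*} [AddCommMonoid R] [Fintype κ'] {s : R}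
    {B : Matrix κ κ R} (hB : B.IsGenDoublyStochastic s) (e : κ ≃ κ') :
    (reindex e e B).IsGenDoublyStochastic s := by
  constructor
  · intro i
    simpa [Equiv.sum_comp e.symm (B (e.symm i))] using hB.1 (e.symm i)
  · intro j
    simpa [Equiv.sum_comp e.symm (fun i => B i (e.symm j))] using hB.2 (e.symm j)

theorem isGenDoublyStochastic_iff_mulVec {R : Type*} [NonAssocSemiring R] {s : R}
    {B : Matrix κ κ R} : B.IsGenDoublyStochastic s ↔ B *ᵥ 1 = s • 1 ∧ 1 ᵥ* B = s • 1 := by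
  simp [IsGenDoublyStochastic, funext_iff, mulVec, vecMul, dotProduct]

variable [DecidableEq κ] {K : Type*} [Field K] {H D : Matrix κ κ K} {v : κ → K} {r s : K}

theorem mul_mul_mulVec_one (hH : H * H = 1) (hHv : H *ᵥ v = r • 1) (hr : r ≠ 0)
    (hD : D *ᵥ v = s • v) : (H * D * H) *ᵥ 1 = s • 1 := by
  have hH1 : r • H *ᵥ 1 = v := by rw [← mulVec_smul, ← hHv, mulVec_mulVec, hH, one_mulVec]
  calc (H * D * H) *ᵥ 1 = r⁻¹ • H *ᵥ (D *ᵥ (r • H *ᵥ 1)) := by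
        rw [mulVec_smul, mulVec_smul, smul_smul, inv_mul_cancel₀ hr, one_smul, mulVec_mulVec,
          mulVec_mulVec]
    _ = s • 1 := by
        rw [hH1, hD, mulVec_smul, hHv, smul_smul, smul_smul, mul_comm r⁻¹ s,
          inv_mul_cancel_right₀ hr]

theorem isGenDoublyStochastic_mul_mul (hH : H * H = 1) (hHt : Hᵀ = H) (hHv : H *ᵥ v = r • 1)
    (hr : r ≠ 0) (hD : D *ᵥ v = s • v) (hDt : Dᵀ *ᵥ v = s • v) :
    (H * D * H).IsGenDoublyStochastic s := by
  refine isGenDoublyStochastic_iff_mulVec.2 ⟨mul_mul_mulVec_one hH hHv hr hD, ?_⟩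
  rw [← mulVec_transpose, transpose_mul, transpose_mul, hHt, ← Matrix.mul_assoc]
  exact mul_mul_mulVec_one hH hHv hr hDt

end

theorem eventually_exists_nonneg_isGenDoublyStochastic_charpoly_eq {ι : Type*} [Fintype ι]
    [DecidableEq ι] (M : Matrix ι ι ℝ) :
    ∀ᶠ s in atTop, ∃ B : Matrix (ι ⊕ Unit) (ι ⊕ Unit) ℝ,
      (∀ i j, 0 ≤ B i j) ∧ B.IsGenDoublyStochastic s ∧ B.charpoly = M.charpoly * (X - C s) := by
  set v : ι ⊕ Unit → ℝ := Pi.single (Sum.inr ()) 1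
  set r : ℝ := (√(Fintype.card (ι ⊕ Unit) : ℝ))⁻¹
  have hr : 0 < r := by positivity
  have hv : v ⬝ᵥ v = 1 := by simp [v]
  have hu : (r • 1 : ι ⊕ Unit → ℝ) ⬝ᵥ r • 1 = 1 := by
    rw [smul_dotProduct, dotProduct_smul, one_dotProduct_one, smul_eq_mul, smul_eq_mul,
      ← mul_assoc, ← mul_inv, Real.mul_self_sqrt (Nat.cast_nonneg _),
      inv_mul_cancel₀ (by positivity)]
  obtain ⟨H, hH, hHt, hHv⟩ := exists_mul_self_eq_one_transpose_eq_mulVec_eq (hv.trans hu.symm)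
  let D : ℝ → Matrix (ι ⊕ Unit) (ι ⊕ Unit) ℝ := fun s => fromBlocks M 0 0 (diagonal fun _ => s)
  have hD : ∀ s, D s = D 0 + s • vecMulVec v v := by
    intro s
    ext (i | i) (j | j) <;> simp [D, v, vecMulVec_apply]
  have hB : ∀ s i j, (H * D s * H) i j = (H * D 0 * H) i j + s * r ^ 2 := by
    intro s i j
    rw [hD s, Matrix.mul_add, Matrix.add_mul, Matrix.mul_smul, Matrix.smul_mul, mul_vecMulVec,
      vecMulVec_mul, ← mulVec_transpose, hHt, hHv]
    simp only [add_apply, smul_apply, vecMulVec_apply, Pi.smul_apply, Pi.one_apply, smul_eq_mul]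
    ring
  have h_large : ∀ᶠ s in atTop, ∀ i j, 0 ≤ (H * D 0 * H) i j + s * r ^ 2 := by
    refine eventually_all.2 fun i => eventually_all.2 fun j => ?_
    filter_upwards [(tendsto_id.atTop_mul_const (pow_pos hr 2)).eventually_ge_atTop
      (-(H * D 0 * H) i j)] with s hs
    rw [id_eq] at hs
    linarith
  filter_upwards [h_large] with s hs
  have hDv : D s *ᵥ v = s • v := by
    ext (i | i) <;> simp [D, v]
  have hDtv : (D s)ᵀ *ᵥ v = s • v := by
    ext (i | i) <;> simp [D, v, fromBlocks_transpose]
  refine ⟨H * D s * H, fun i j => hB s i j ▸ hs i j,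
    isGenDoublyStochastic_mul_mul hH hHt hHv hr.ne' hDv hDtv, ?_⟩
  rw [charpoly_mul_comm, ← Matrix.mul_assoc, hH, Matrix.one_mul, charpoly_fromBlocks_zero₁₂,
    charpoly_diagonal, Fintype.prod_unique]

end Matrix

/-- Let `A` be a real `n × n` matrix having `1` as an eigenvalue, i.e. `(t - 1)` divides
its characteristic polynomial.  Then there exist `k ≥ 0` and an entrywise nonnegative
real `n × n` matrix `B` with all row and column sums equal to `1 + k` such that
`charpoly B * (t - 1) = charpoly A * (t - (1 + k))`; i.e. the eigenvalue multiset of `B`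
is that of `A` with one occurrence of `1` replaced by `1 + k`. -/
theorem stmt15 (n : ℕ) (A : Matrix (Fin n) (Fin n) ℝ)
    (h1 : (X - C 1) ∣ A.charpoly) :
    ∃ k : ℝ, 0 ≤ k ∧
      ∃ B : Matrix (Fin n) (Fin n) ℝ,
        (∀ i j, 0 ≤ B i j) ∧
        (∀ i, ∑ j, B i j = 1 + k) ∧
        (∀ j, ∑ i, B i j = 1 + k) ∧
        B.charpoly * (X - C 1) = A.charpoly * (X - C (1 + k)) := by
  obtain ⟨p, hp⟩ := h1
  have hp_monic : p.Monic := (monic_X_sub_C 1).of_mul_monic_left (hp ▸ A.charpoly_monic)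
  have hp_deg : p.natDegree + 1 = n := by
    have := A.charpoly_natDegree_eq_dim
    rw [hp, (monic_X_sub_C 1).natDegree_mul hp_monic, natDegree_X_sub_C, Fintype.card_fin] at this
    omega
  obtain ⟨M, hM⟩ := hp_monic.exists_matrix_charpoly_eq
  obtain ⟨s, hs, B, hB_nonneg, hB_sums, hB_charpoly⟩ := ((eventually_ge_atTop 1).and
    (eventually_exists_nonneg_isGenDoublyStochastic_charpoly_eq M)).exists
  let e : Fin p.natDegree ⊕ Unit ≃ Fin n := Fintype.equivOfCardEq (by simp [hp_deg])
  refine ⟨s - 1, by linarith, reindex e e B, fun i j => hB_nonneg _ _, ?_⟩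
  obtain ⟨hrows, hcols⟩ := hB_sums.reindex e
  rw [add_sub_cancel]
  refine ⟨hrows, hcols, ?_⟩
  rw [charpoly_reindex, hB_charpoly, hM, hp]
  ring
end

section
/- Let λ_2, ..., λ_n be complex numbers whose multiset is closed under complex conjugation. Then there exists a real number r ≥ 0 and an entrywise nonnegative real n×n matrix D with every row sum and every column sum equal to r such that the characteristic polynomial of D, viewed over ℂ, equals (t − r)·∏_{j=2}^{n}(t − λ_j). -/
/-! Self-conjugacy makes `∏ (X - λⱼ)` the complexification of a real monic polynomial `q`, which is
the characteristic polynomial of a real matrix `A`. Take `Q` with orthonormal columns, the first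
one being `𝟙 / √n`, and conjugate the block matrix `r ⊕ A` by `Q`. The result `D` has
characteristic polynomial `(X - r) q`, and `𝟙` is a right and a left eigenvector of `D` for `r`,
so all its row and column sums are `r`. Finally `D = P + (r / n) J` with `P = Q (0 ⊕ A) Qᵀ`
independent of `r`, so `D` is entrywise nonnegative once `r` is large. -/

open Polynomial Matrix

theorem map_conj_prod_X_sub_C {ι : Type*} [Fintype ι] {lam : ι → ℂ} {σ : Equiv.Perm ι}
    (hσ : ∀ i, lam (σ i) = starRingEnd ℂ (lam i)) :
    (∏ i, (X - C (lam i))).map (starRingEnd ℂ) = ∏ i, (X - C (lam i)) :=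
  calc _ = ∏ i, (X - C (lam (σ i))) := by simp [Polynomial.map_prod, hσ]
    _ = _ := Equiv.prod_comp σ fun i => X - C (lam i)

theorem exists_monic_map_ofRealHom_eq_of_map_conj {p : ℂ[X]} (hp : p.Monic)
    (hconj : p.map (starRingEnd ℂ) = p) :
    ∃ q : ℝ[X], q.Monic ∧ q.map Complex.ofRealHom = p := by
  have hlifts : p ∈ lifts Complex.ofRealHom := (lifts_iff_coeff_lifts p).mpr fun k =>
    ⟨(p.coeff k).re, Complex.conj_eq_iff_re.mp (by rw [← coeff_map, hconj])⟩
  obtain ⟨q, hq, -, hqm⟩ := lifts_and_degree_eq_and_monic hlifts hp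
  exact ⟨q, hqm, hq⟩

theorem exists_matrix_charpoly_eq {K : Type*} [Field K] (q : K[X]) (hq : q.Monic) :
    ∃ A : Matrix (Fin q.natDegree) (Fin q.natDegree) K, A.charpoly = q := by
  let pb := AdjoinRoot.powerBasis hq.ne_zero
  have hdim : pb.dim = q.natDegree := rfl
  refine ⟨Matrix.reindex (finCongr hdim) (finCongr hdim)
      (Algebra.leftMulMatrix pb.basis pb.gen), ?_⟩
  rw [Matrix.charpoly_reindex, _root_.charpoly_leftMulMatrix,
    AdjoinRoot.minpoly_powerBasis_gen_of_monic hq]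

theorem charpoly_mul_mul_transpose {κ ι R : Type*} [Fintype κ] [Fintype ι] [DecidableEq κ]
    [DecidableEq ι] [CommRing R] {Q : Matrix κ ι R} (hQ : Qᵀ * Q = 1)
    (hcard : Fintype.card κ = Fintype.card ι) (B : Matrix ι ι R) :
    (Q * B * Qᵀ).charpoly = B.charpoly := by
  rw [charpoly_mul_comm_of_le _ _ hcard.ge, hcard, Nat.sub_self, pow_zero, one_mul,
    ← Matrix.mul_assoc, hQ, Matrix.one_mul]

theorem mul_mul_transpose_mulVec_eq_smul {κ ι R : Type*} [Fintype κ] [Fintype ι]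
    [DecidableEq ι] [CommRing R] {Q : Matrix κ ι R} (hQ : Qᵀ * Q = 1) {B : Matrix ι ι R}
    {e : ι → R} {r : R} (hB : B *ᵥ e = r • e) : (Q * B * Qᵀ) *ᵥ (Q *ᵥ e) = r • (Q *ᵥ e) := by
  rw [← mulVec_mulVec, ← mulVec_mulVec, mulVec_mulVec (M := Qᵀ), hQ, one_mulVec, hB,
    mulVec_smul]

theorem exists_transpose_mul_self_eq_one_mulVec_single {κ ι : Type*} [Fintype κ] [Fintype ι]
    [DecidableEq ι] (hcard : Fintype.card κ = Fintype.card ι) (k : ι) :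
    ∃ Q : Matrix κ ι ℝ, Qᵀ * Q = 1 ∧ Q *ᵥ Pi.single k √(Fintype.card κ) = 1 := by
  have hn : (0 : ℝ) < Fintype.card κ := by
    rw [hcard]; exact_mod_cast Fintype.card_pos_iff.mpr ⟨k⟩
  let v : EuclideanSpace ℝ κ := WithLp.toLp 2 fun _ => (√(Fintype.card κ))⁻¹
  have hv : Orthonormal ℝ (({k} : Set ι).domRestrict fun _ => v) := by
    rw [orthonormal_subsingleton_iff]
    intro
    simp [v, EuclideanSpace.norm_eq, hn.le, hn.ne']
  obtain ⟨b, hb⟩ := hv.exists_orthonormalBasis_extension_of_card_eq (by simpa using hcard)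
  refine ⟨of fun i j => b j i, ?_, ?_⟩
  · ext j l
    have := orthonormal_iff_ite.mp b.orthonormal j l
    simpa [mul_apply, EuclideanSpace.inner_eq_star_dotProduct, dotProduct, mul_comm, one_apply]
      using this
  · ext i
    simp [mulVec, dotProduct, Pi.single_apply, hb k rfl, v, hn.ne']

variable {ι R : Type*} [DecidableEq ι]

theorem fromBlocks_diagonal_mulVec_single [Fintype ι] [CommRing R] (r a : R) (A : Matrix ι ι R) :
    fromBlocks (diagonal fun _ : Unit => r) 0 0 A *ᵥ Pi.single (Sum.inl ()) a =
      r • Pi.single (Sum.inl ()) a := by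
  ext (i | i) <;> simp

theorem fromBlocks_diagonal_eq_add_vecMulVec [Field R] (r a : R) (ha : a ≠ 0) (A : Matrix ι ι R) :
    fromBlocks (diagonal fun _ : Unit => r) 0 0 A =
      fromBlocks 0 0 0 A +
        (r / a ^ 2) • vecMulVec (Pi.single (Sum.inl ()) a) (Pi.single (Sum.inl ()) a) := by
  ext (i | i) (j | j) <;> simp [vecMulVec, Pi.single_apply, ← sq, ha]

theorem charpoly_fromBlocks_diagonal [Fintype ι] [CommRing R] (r : R) (A : Matrix ι ι R) :
    (fromBlocks (diagonal fun _ : Unit => r) 0 0 A).charpoly = (X - C r) * A.charpoly := by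
  simp [charpoly_diagonal]

theorem exists_nonneg_sums_eq_charpoly_eq {κ : Type*} [Fintype κ] [DecidableEq κ] [Fintype ι]
    (A : Matrix ι ι ℝ) (hcard : Fintype.card κ = Fintype.card ι + 1) :
    ∃ r : ℝ, 0 ≤ r ∧ ∃ D : Matrix κ κ ℝ, (∀ i j, 0 ≤ D i j) ∧ (∀ i, ∑ j, D i j = r) ∧
      (∀ j, ∑ i, D i j = r) ∧ D.charpoly = (X - C r) * A.charpoly := by
  have hcard' : Fintype.card κ = Fintype.card (Unit ⊕ ι) := by simp [hcard, add_comm]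
  obtain ⟨Q, hQ, hQe⟩ := exists_transpose_mul_self_eq_one_mulVec_single hcard' (Sum.inl ())
  set n : ℝ := (Fintype.card κ : ℝ)
  have hn : 0 < n := by simp only [n, hcard]; positivity
  set P := Q * (fromBlocks 0 0 0 A : Matrix (Unit ⊕ ι) (Unit ⊕ ι) ℝ) * Qᵀ
  set M := ∑ x : κ × κ, |P x.1 x.2|
  set D := Q * fromBlocks (diagonal fun _ : Unit => n * M) 0 0 A * Qᵀ with hD
  have hDP : D = P + M • vecMulVec 1 1 := by
    rw [hD, fromBlocks_diagonal_eq_add_vecMulVec _ √n (by positivity), Matrix.mul_add,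
      Matrix.add_mul, Matrix.mul_smul, Matrix.smul_mul, mul_vecMulVec, vecMulVec_mul,
      ← mulVec_transpose, transpose_transpose, hQe, Real.sq_sqrt hn.le,
      mul_div_cancel_left₀ M hn.ne']
  have hrow : D *ᵥ 1 = (n * M) • 1 := by
    rw [← hQe]
    exact mul_mul_transpose_mulVec_eq_smul hQ (fromBlocks_diagonal_mulVec_single _ _ A)
  have hcol : Dᵀ *ᵥ 1 = (n * M) • 1 := by
    rw [← hQe]
    simpa [D, Matrix.mul_assoc, fromBlocks_transpose] using
      mul_mul_transpose_mulVec_eq_smul hQ (fromBlocks_diagonal_mulVec_single (n * M) √n Aᵀ)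
  refine ⟨n * M, by positivity, D, fun i j => ?_, fun i => ?_, fun j => ?_, ?_⟩
  · have hPM : |P i j| ≤ M :=
      Finset.single_le_sum (f := fun x : κ × κ => |P x.1 x.2|) (fun _ _ => abs_nonneg _)
        (Finset.mem_univ (i, j))
    rw [hDP]
    simp only [Matrix.add_apply, Matrix.smul_apply, vecMulVec_apply, Pi.one_apply, mul_one,
      smul_eq_mul]
    linarith [neg_abs_le (P i j)]
  · simpa [mulVec, dotProduct] using congrFun hrow i
  · simpa [mulVec, dotProduct] using congrFun hcol j
  · rw [charpoly_mul_mul_transpose hQ hcard', charpoly_fromBlocks_diagonal]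

/-- Let `λ_2, …, λ_n` (here `lam 0, …, lam (m-1)` with `n = m+1`) be complex numbers
whose multiset is closed under complex conjugation.  Then there exist `r ≥ 0` and an
entrywise nonnegative real `n × n` matrix `D` with every row and column sum equal to `r`
whose characteristic polynomial, viewed over `ℂ`, equals
`(t - r) · ∏_{j=2}^{n} (t - λ_j)`. -/
theorem stmt16 (m : ℕ) (lam : Fin m → ℂ)
    (hconj : ∃ σ : Equiv.Perm (Fin m), ∀ i, lam (σ i) = starRingEnd ℂ (lam i)) :
    ∃ r : ℝ, 0 ≤ r ∧
      ∃ D : Matrix (Fin (m + 1)) (Fin (m + 1)) ℝ,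
        (∀ i j, 0 ≤ D i j) ∧
        (∀ i, ∑ j, D i j = r) ∧
        (∀ j, ∑ i, D i j = r) ∧
        (D.map (Complex.ofReal)).charpoly = (X - C (r : ℂ)) * ∏ i, (X - C (lam i)) := by
  obtain ⟨σ, hσ⟩ := hconj
  obtain ⟨q, hqm, hq⟩ := exists_monic_map_ofRealHom_eq_of_map_conj
    (monic_prod_of_monic _ _ fun i _ => monic_X_sub_C (lam i)) (map_conj_prod_X_sub_C hσ)
  have hdeg : q.natDegree = m := by
    rw [← natDegree_map_eq_of_injective (f := Complex.ofRealHom) Complex.ofReal_injective, hq]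
    simp
  obtain ⟨A, hA⟩ := exists_matrix_charpoly_eq q hqm
  subst hdeg
  obtain ⟨r, hr, D, hD, hrow, hcol, hchar⟩ :=
    exists_nonneg_sums_eq_charpoly_eq (κ := Fin (q.natDegree + 1)) A (by simp)
  refine ⟨r, hr, D, hD, hrow, hcol, ?_⟩
  change (D.map Complex.ofRealHom).charpoly = _
  rw [charpoly_map, hchar, hA, Polynomial.map_mul, Polynomial.map_sub, map_X, map_C, hq]
  rfl
end
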